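/- Let G be a connected simple graph on a finite vertex type V and let H be a spanning tree of G (a connected acyclic spanning subgraph). If E and E' are additive no-arbitrage matrices over G such that E i j = E' i j for every edge (i, j) of H, then E = E'. That is, a no-arbitrage exchange matrix over a connected graph is uniquely determined by its values on the edges of a spanning tree. -/

import Mathlib

/-- The sum of `E` over the consecutive edge steps of a walk `w` in `G`:
`∑_{i < length w} E v_i v_{i+1}`. -/
def walkSum {V : Type*} {G : SimpleGraph V} (E : V → V → ℝ) {u v : V} (w : G.Walk u v) : ℝ :=
  ∑ i ∈ Finset.range w.length, E (w.getVert i) (w.getVert (i + 1))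

/-- `E` is an additive no-arbitrage matrix over `G`: it vanishes on non-adjacent pairs and
its sum over the steps of every closed walk is zero. -/
def IsNoArbitrage {V : Type*} (G : SimpleGraph V) (E : V → V → ℝ) : Prop :=
  (∀ i j, ¬ G.Adj i j → E i j = 0) ∧ ∀ (v : V) (w : G.Walk v v), walkSum E w = 0

/-!
For a `G`-edge `ij` and a path `p` from `j` to `i` in the connected subgraph `H`, the closed
walk `ij` followed by `p` forces `E i j = -(sum of E along p)`, and that sum only reads `E` on
edges of `H`.
-/

open SimpleGraph

section walkSum

variable {V : Type*} {G : SimpleGraph V} (E : V → V → ℝ)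

lemma walkSum_cons {u v x : V} (h : G.Adj u v) (p : G.Walk v x) :
    walkSum E (Walk.cons h p) = E u v + walkSum E p := by
  rw [walkSum, walkSum, Walk.length_cons, Finset.sum_range_succ', add_comm]
  simp only [Walk.getVert_cons_succ, Walk.getVert_zero]

lemma walkSum_mapLe {H : SimpleGraph V} (hle : H ≤ G) {u v : V} (p : H.Walk u v) :
    walkSum E (p.mapLe hle) = walkSum E p := by
  simp only [walkSum, Walk.length_mapLe, Walk.mapLe,
    Walk.getVert_map, Hom.coe_ofLE, id]

lemma walkSum_congr {E' : V → V → ℝ} (hEE' : ∀ i j, G.Adj i j → E i j = E' i j)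
    {u v : V} (p : G.Walk u v) : walkSum E p = walkSum E' p :=
  Finset.sum_congr rfl fun _ hk ↦ hEE' _ _ (p.adj_getVert_succ (Finset.mem_range.mp hk))

end walkSum

lemma IsNoArbitrage.apply_eq_neg_walkSum {V : Type*} {G : SimpleGraph V} {E : V → V → ℝ}
    (hE : IsNoArbitrage G E) {i j : V} (hij : G.Adj i j) (q : G.Walk j i) :
    E i j = -walkSum E q := by
  have hcycle := hE.2 i (.cons hij q)
  rw [walkSum_cons] at hcycle
  linarith

theorem no_arbitrage_spanning_tree_determines_general {V : Type*}
    (G H : SimpleGraph V)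
    (hle : H ≤ G) (hconn : H.Connected)
    (E E' : V → V → ℝ)
    (hE : IsNoArbitrage G E) (hE' : IsNoArbitrage G E')
    (hagree : ∀ i j, H.Adj i j → E i j = E' i j) :
    E = E' := by
  funext i j
  by_cases hij : G.Adj i j
  · obtain ⟨p⟩ := hconn j i
    rw [hE.apply_eq_neg_walkSum hij (p.mapLe hle), hE'.apply_eq_neg_walkSum hij (p.mapLe hle),
      walkSum_mapLe, walkSum_mapLe, walkSum_congr E hagree]
  · rw [hE.1 i j hij, hE'.1 i j hij]

/-- A no-arbitrage matrix over a connected graph is uniquely determined by its values on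
the edges of a spanning tree. -/
theorem no_arbitrage_spanning_tree_determines {V : Type*} [Fintype V]
    (G H : SimpleGraph V) (hG : G.Connected)
    (hle : H ≤ G) (hconn : H.Connected) (hac : H.IsAcyclic)
    (E E' : V → V → ℝ)
    (hE : IsNoArbitrage G E) (hE' : IsNoArbitrage G E')
    (hagree : ∀ i j, H.Adj i j → E i j = E' i j) :
    E = E' :=
  no_arbitrage_spanning_tree_determines_general G H hle hconn E E' hE hE' hagree
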